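/- Let A be an associative unital ℂ-algebra, q ∈ ℂ nonzero, g ∈ ℂ, N ≥ 1, and for n = 1,…,N let uₙ, vₙ ∈ A be invertible with uₙ·vₙ = q²·vₙ·uₙ, and suppose elements at distinct sites commute (uₙ and vₙ each commute with uₘ and vₘ whenever n ≠ m). For z ∈ ℂ∖{0} let Lₙ(z) ∈ M₂(A) have entries Lₙ(z)₁₁ = z·1 − z⁻¹·vₙ, Lₙ(z)₁₂ = g·uₙ⁻¹, Lₙ(z)₂₁ = −g·q⁻¹·uₙ·vₙ, Lₙ(z)₂₂ = 0, and let the monodromy matrix be T(z) = L_N(z)·L_{N−1}(z)·…·L₁(z), with entries T(z)₁₁ = A(z), T(z)₁₂ = B(z), T(z)₂₁ = C(z), T(z)₂₂ = D(z). Fix s ∈ ℂ with s² = q. Then for every z ∈ ℂ∖{0}, A(zs)·D(zs⁻¹) − q·B(zs)·C(zs⁻¹) = g^{2N}·v_N·v_{N−1}·…·v₁. -/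
import Mathlib


/-- The quantum Lax matrix of the relativistic Toda chain, built from a Weyl
pair `u, v` (with `u·v = q²·v·u`) and coupling constant `g`. -/
noncomputable def laxMatrix {A : Type*} [Ring A] [Algebra ℂ A]
    (q g z : ℂ) (u v : Aˣ) : Matrix (Fin 2) (Fin 2) A :=
  !![z • (1 : A) - z⁻¹ • (v : A), g • (↑u⁻¹ : A);
     (-(g * q⁻¹)) • ((u : A) * (v : A)), 0]

/-- The `q`-antisymmetrizer sign matrix. -/
def epsMat (q : ℂ) : Matrix (Fin 2) (Fin 2) ℂ := !![0, 1; -q, 0]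

lemma step_core {A : Type*} [Ring A] [Algebra ℂ A] (q : ℂ)
    (a0 a1 b0 b1 p00 p01 p10 p11 r00 r01 r10 r11 D X : A)
    (c000 : Commute b0 p00) (c001 : Commute b0 p01)
    (c010 : Commute b0 p10) (c011 : Commute b0 p11)
    (c100 : Commute b1 p00) (c101 : Commute b1 p01)
    (c110 : Commute b1 p10) (c111 : Commute b1 p11)
    (i00 : p00 * r01 - q • (p01 * r00) = 0)
    (i01 : p00 * r11 - q • (p01 * r10) = D)
    (i10 : p10 * r01 - q • (p11 * r00) = (-q) • D)
    (i11 : p10 * r11 - q • (p11 * r10) = 0)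
    (hab : a0 * b1 - q • (a1 * b0) = X) :
    (a0 * p00 + a1 * p10) * (b0 * r01 + b1 * r11)
      - q • ((a0 * p01 + a1 * p11) * (b0 * r00 + b1 * r10)) = X * D := by
  have key : (a0 * p00 + a1 * p10) * (b0 * r01 + b1 * r11)
      - q • ((a0 * p01 + a1 * p11) * (b0 * r00 + b1 * r10))
      = a0 * (b0 * (p00 * r01 - q • (p01 * r00)))
        + a0 * (b1 * (p00 * r11 - q • (p01 * r10)))
        + a1 * (b0 * (p10 * r01 - q • (p11 * r00)))
        + a1 * (b1 * (p10 * r11 - q • (p11 * r10))) := by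
    simp only [mul_sub, mul_add, add_mul, smul_add, mul_smul_comm, mul_assoc]
    rw [c000.symm.left_comm, c001.symm.left_comm, c010.symm.left_comm, c011.symm.left_comm,
      c100.symm.left_comm, c101.symm.left_comm, c110.symm.left_comm, c111.symm.left_comm]
    module
  rw [key, i00, i01, i10, i11, ← hab]
  simp only [mul_zero, add_zero, sub_mul, smul_mul_assoc, mul_smul_comm, mul_assoc]
  module

lemma single_site {A : Type*} [Ring A] [Algebra ℂ A] (q g s z : ℂ)
    (hq : q ≠ 0) (hs : s ^ 2 = q) (hz : z ≠ 0) (u v : Aˣ)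
    (hWeyl : (u : A) * (v : A) = q ^ 2 • ((v : A) * (u : A))) (i j : Fin 2) :
    laxMatrix q g (z * s) u v i 0 * laxMatrix q g (z * s⁻¹) u v j 1
      - q • (laxMatrix q g (z * s) u v i 1 * laxMatrix q g (z * s⁻¹) u v j 0)
      = epsMat q i j • (g ^ 2 • (v : A)) := by
  subst hs
  have hs0 : s ≠ 0 := fun h => hq (by simp [h])
  have hq4 : ((s ^ 2) ^ 2 : ℂ) ≠ 0 := pow_ne_zero 2 hq
  have h2 : (u : A) * (v : A) * (↑u⁻¹ : A) = ((s ^ 2) ^ 2 : ℂ) • (v : A) := by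
    rw [hWeyl, smul_mul_assoc, mul_assoc, Units.mul_inv, mul_one]
  have h1 : (↑u⁻¹ : A) * (v : A) = (((s ^ 2) ^ 2 : ℂ))⁻¹ • ((v : A) * (↑u⁻¹ : A)) := by
    have h := congrArg (fun x => (↑u⁻¹ : A) * x * (↑u⁻¹ : A)) hWeyl
    simp only [mul_smul_comm, smul_mul_assoc, mul_assoc, Units.inv_mul_cancel_left,
      Units.mul_inv, mul_one] at h
    rw [h, smul_smul, inv_mul_cancel₀ hq4, one_smul]
  fin_cases i <;> fin_cases j <;>
    simp only [laxMatrix, epsMat, Matrix.cons_val', Matrix.cons_val_zero, Matrix.cons_val_one,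
      Matrix.head_cons, Matrix.head_fin_const, Matrix.empty_val', Matrix.cons_val_fin_one,
      Matrix.of_apply, Fin.isValue, Fin.mk_one, Fin.zero_eta] <;>
    simp only [sub_mul, mul_sub, smul_mul_assoc, mul_smul_comm, one_mul, mul_one, mul_zero,
      zero_mul, smul_zero, sub_zero, zero_sub, smul_smul, h1, h2,
      Units.inv_mul_cancel_left] <;>
    match_scalars <;> (field_simp; try ring)

lemma prod_take_succ {M : Type*} [Monoid M] (l : List M) (n : ℕ) (h : n < l.length) :
    ((l.take (n + 1)).reverse).prod = l[n] * ((l.take n).reverse).prod := by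
  rw [List.take_succ, List.reverse_append]
  simp [List.getElem?_eq_getElem h]

lemma commute_lax_entry {A : Type*} [Ring A] [Algebra ℂ A] (q g w : ℂ) (u v : Aˣ) (x : A)
    (hu : Commute x (u : A)) (hv : Commute x (v : A)) (i j : Fin 2) :
    Commute x (laxMatrix q g w u v i j) := by
  have hu' : Commute x (↑u⁻¹ : A) := hu.units_inv_right
  fin_cases i <;> fin_cases j <;>
    simp only [laxMatrix, Matrix.cons_val', Matrix.cons_val_zero, Matrix.cons_val_one,
      Matrix.head_cons, Matrix.head_fin_const, Matrix.empty_val', Matrix.cons_val_fin_one,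
      Matrix.of_apply, Fin.isValue, Fin.mk_one, Fin.zero_eta]
  · exact ((Commute.one_right x).smul_right w).sub_right (hv.smul_right w⁻¹)
  · exact hu'.smul_right g
  · exact (hu.mul_right hv).smul_right _
  · exact Commute.zero_right x

lemma commute_prod_take {A : Type*} [Ring A] [Algebra ℂ A] {N : ℕ}
    (q g w : ℂ) (u v : Fin N → Aˣ) (x : A) :
    ∀ n : ℕ, n ≤ N →
      (∀ k : Fin N, (k : ℕ) < n → Commute x (u k : A) ∧ Commute x (v k : A)) →
      ∀ i j : Fin 2,
      Commute x ((((List.ofFn fun k : Fin N => laxMatrix q g w (u k) (v k)).take n).reverse).prod i j)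
  | 0, _, _, i, j => by
      simp only [List.take_zero, List.reverse_nil, List.prod_nil, Matrix.one_apply]
      split <;> [exact Commute.one_right x; exact Commute.zero_right x]
  | (n + 1), hn, hc, i, j => by
      have hnN : n < N := hn
      have hlen : n < (List.ofFn fun k : Fin N => laxMatrix q g w (u k) (v k)).length := by
        simpa using hnN
      rw [prod_take_succ _ _ hlen, List.getElem_ofFn, Matrix.mul_apply, Fin.sum_univ_two]
      have ih := commute_prod_take q g w u v x n (le_of_lt hnN)
        (fun k hk => hc k (Nat.lt_succ_of_lt hk))
      have hk : ∀ a b : Fin 2, Commute x (laxMatrix q g w (u ⟨n, hnN⟩) (v ⟨n, hnN⟩) a b) :=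
        fun a b => commute_lax_entry q g w _ _ x
          (hc ⟨n, hnN⟩ (Nat.lt_succ_self n)).1 (hc ⟨n, hnN⟩ (Nat.lt_succ_self n)).2 a b
      exact ((hk i 0).mul_right (ih 0 j)).add_right ((hk i 1).mul_right (ih 1 j))

lemma main_ind {A : Type*} [Ring A] [Algebra ℂ A] (q g s z : ℂ)
    (hq : q ≠ 0) (hs : s ^ 2 = q) (hz : z ≠ 0)
    {N : ℕ} (u v : Fin N → Aˣ)
    (hWeyl : ∀ n, (u n : A) * (v n : A) = q ^ 2 • ((v n : A) * (u n : A)))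
    (huu : ∀ n m, n ≠ m → (u n : A) * (u m : A) = (u m : A) * (u n : A))
    (huv : ∀ n m, n ≠ m → (u n : A) * (v m : A) = (v m : A) * (u n : A))
    (hvv : ∀ n m, n ≠ m → (v n : A) * (v m : A) = (v m : A) * (v n : A))
    (n : ℕ) (hn : n ≤ N) :
    ∀ i j : Fin 2,
      (((List.ofFn fun k : Fin N => laxMatrix q g (z * s) (u k) (v k)).take n).reverse).prod i 0
        * (((List.ofFn fun k : Fin N => laxMatrix q g (z * s⁻¹) (u k) (v k)).take n).reverse).prod j 1
      - q • ((((List.ofFn fun k : Fin N => laxMatrix q g (z * s) (u k) (v k)).take n).reverse).prod i 1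
        * (((List.ofFn fun k : Fin N => laxMatrix q g (z * s⁻¹) (u k) (v k)).take n).reverse).prod j 0)
      = epsMat q i j • ((g ^ (2 * n)) • (((List.ofFn fun k : Fin N => (v k : A)).take n).reverse).prod) := by
  induction n with
  | zero =>
    intro i j
    fin_cases i <;> fin_cases j <;>
      simp [epsMat, Matrix.one_apply]
  | succ n ih =>
    intro i j
    have hnN : n < N := hn
    have ihh := ih (le_of_lt hnN)
    have hlen1 : n < (List.ofFn fun k : Fin N => laxMatrix q g (z * s) (u k) (v k)).length := by
      simpa using hnN
    have hlen2 : n < (List.ofFn fun k : Fin N => laxMatrix q g (z * s⁻¹) (u k) (v k)).length := by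
      simpa using hnN
    have hlen3 : n < (List.ofFn fun k : Fin N => (v k : A)).length := by simpa using hnN
    rw [prod_take_succ _ _ hlen1, prod_take_succ _ _ hlen2, prod_take_succ _ _ hlen3,
      List.getElem_ofFn, List.getElem_ofFn, List.getElem_ofFn]
    simp only [Matrix.mul_apply, Fin.sum_univ_two]
    set m : Fin N := ⟨n, hnN⟩ with hm
    have hcb : ∀ b : Fin 2, ∀ k l : Fin 2,
        Commute (laxMatrix q g (z * s⁻¹) (u m) (v m) j b)
          ((((List.ofFn fun k : Fin N => laxMatrix q g (z * s) (u k) (v k)).take n).reverse).prod k l) := by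
      intro b k l
      refine commute_prod_take q g (z * s) u v _ n (le_of_lt hnN) ?_ k l
      intro k' hk'
      have hne : k' ≠ m := by
        intro h; rw [h] at hk'; exact absurd hk' (lt_irrefl n)
      constructor
      · exact (commute_lax_entry q g (z * s⁻¹) (u m) (v m) ((u k' : A))
          (huu k' m hne) (huv k' m hne) j b).symm
      · exact (commute_lax_entry q g (z * s⁻¹) (u m) (v m) ((v k' : A))
          (huv m k' hne.symm).symm (hvv k' m hne) j b).symm
    have hD := single_site q g s z hq hs hz (u m) (v m) (hWeyl m) i j
    have res := step_core q _ _ _ _ _ _ _ _ _ _ _ _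
        ((g ^ (2 * n)) • (((List.ofFn fun k : Fin N => (v k : A)).take n).reverse).prod)
        (epsMat q i j • (g ^ 2 • (v m : A)))
        (hcb 0 0 0) (hcb 0 0 1) (hcb 0 1 0) (hcb 0 1 1)
        (hcb 1 0 0) (hcb 1 0 1) (hcb 1 1 0) (hcb 1 1 1)
        (by simpa [epsMat] using ihh 0 0) (by simpa [epsMat] using ihh 0 1)
        (by simpa [epsMat] using ihh 1 0) (by simpa [epsMat] using ihh 1 1)
        hD
    rw [res]
    simp only [smul_mul_assoc, mul_smul_comm, smul_smul]
    match_scalars <;> ring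

/-- The quantum determinant of the monodromy matrix
`T(z) = L_N(z)·…·L₁(z)` of the relativistic Toda chain is multiplicative:
`A(zq^{1/2})·D(zq^{−1/2}) − q·B(zq^{1/2})·C(zq^{−1/2}) = g^{2N}·v_N·…·v₁`. -/
theorem monodromy_quantum_determinant (A : Type*) [Ring A] [Algebra ℂ A]
    (q g s : ℂ) (hq : q ≠ 0) (hs : s ^ 2 = q)
    (N : ℕ) (hN : 1 ≤ N) (u v : Fin N → Aˣ)
    (hWeyl : ∀ n, (u n : A) * (v n : A) = q ^ 2 • ((v n : A) * (u n : A)))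
    (huu : ∀ n m, n ≠ m → (u n : A) * (u m : A) = (u m : A) * (u n : A))
    (huv : ∀ n m, n ≠ m → (u n : A) * (v m : A) = (v m : A) * (u n : A))
    (hvv : ∀ n m, n ≠ m → (v n : A) * (v m : A) = (v m : A) * (v n : A))
    (z : ℂ) (hz : z ≠ 0) :
    let T : ℂ → Matrix (Fin 2) (Fin 2) A := fun w =>
      ((List.ofFn fun n : Fin N => laxMatrix q g w (u n) (v n)).reverse).prod
    T (z * s) 0 0 * T (z * s⁻¹) 1 1 - q • (T (z * s) 0 1 * T (z * s⁻¹) 1 0)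
      = (g ^ (2 * N)) • ((List.ofFn fun n : Fin N => (v n : A)).reverse).prod := by
  intro T
  have h := main_ind q g s z hq hs hz u v hWeyl huu huv hvv N le_rfl 0 1
  rw [show (List.ofFn fun k : Fin N => laxMatrix q g (z * s) (u k) (v k)).take N
        = List.ofFn fun k : Fin N => laxMatrix q g (z * s) (u k) (v k) from
      List.take_of_length_le (by simp),
    show (List.ofFn fun k : Fin N => laxMatrix q g (z * s⁻¹) (u k) (v k)).take N
        = List.ofFn fun k : Fin N => laxMatrix q g (z * s⁻¹) (u k) (v k) from
      List.take_of_length_le (by simp),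
    show (List.ofFn fun k : Fin N => (v k : A)).take N
        = List.ofFn fun k : Fin N => (v k : A) from
      List.take_of_length_le (by simp)] at h
  simpa [T, epsMat] using h
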